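/- arXiv:2003.05554 — 5 statements merged into one kernel-verified Lean document; each statement's English description precedes it below -/
import Mathlib

section
/- Let γ > 0, μ ∈ ℝ, b ∈ ℂⁿ, and write b = B₁ + i B₂ with B₁, B₂ ∈ ℝⁿ; let B̃ = (B₁, B₂) ∈ ℝ^{n×2}, let J = [[0, 1], [−1, 0]], and set N = √(2/γ)·I₂ and R = μ J. Then with G = N Nᵀ + R − Rᵀ = (2/γ) I₂ + 2μ J, for every τ ≥ 0 one has B̃ exp(−(τ/2) G) B̃ᵀ = e^{−τ/γ} · Re( e^{−iμτ} b b^* ). In other words, every Simple Real Spectral Mixture kernel based on the Cauchy distribution is a LEG kernel. -/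
open Matrix

/-!
Identify `ℂ` with the real `2 × 2` matrices `!![x, -y; y, x]` through the regular
representation `z ↦ Algebra.leftMulMatrix Complex.basisOneI z`. This is a continuous algebra
homomorphism, so it commutes with the exponential. The matrix `-(τ/2) G = -(τ/γ) I₂ - μτ J`
represents `z = -τ/γ + iμτ`, so `exp (-(τ/2) G)` represents `exp z`, and the real bilinear form
`B̃ M B̃ᵀ` of the matrix `M` representing `w` has entries `Re (w̄ bᵢ b̄ⱼ)`. Finally
`conj (exp z) = e^{-τ/γ} e^{-iμτ}`.
-/

theorem NormedSpace.exp_leftMulMatrix {𝕜 S ι : Type*} [RCLike 𝕜] [NormedRing S]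
    [NormedAlgebra 𝕜 S] [CompleteSpace S] [Fintype ι] [DecidableEq ι]
    (b : Module.Basis ι 𝕜 S) (s : S) :
    exp (Algebra.leftMulMatrix b s) = Algebra.leftMulMatrix b (exp s) := by
  let : NormedRing (Matrix ι ι 𝕜) := Matrix.linftyOpNormedRing
  let : NormedAlgebra 𝕜 (Matrix ι ι 𝕜) := Matrix.linftyOpNormedAlgebra
  let : NormedAlgebra ℚ S := NormedAlgebra.restrictScalars ℚ 𝕜 S
  have : FiniteDimensional 𝕜 S := Module.Finite.of_basis b
  have hc : Continuous (Algebra.leftMulMatrix b) :=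
    (Algebra.leftMulMatrix b).toLinearMap.continuous_of_finiteDimensional
  exact (map_exp _ hc s).symm

theorem Complex.reImRows_mul_leftMulMatrix_mul_transpose {ι : Type*} (b : ι → ℂ) (w : ℂ)
    (i j : ι) :
    (Matrix.of (fun i => ![(b i).re, (b i).im]) * Algebra.leftMulMatrix basisOneI w *
      (Matrix.of (fun i => ![(b i).re, (b i).im]))ᵀ) i j = (star w * (b i * star (b j))).re := by
  simp [Algebra.leftMulMatrix_complex, mul_apply, Fin.sum_univ_two]
  ring

theorem smul_cauchyGenerator_eq_leftMulMatrix {γ : ℝ} (hγ : 0 ≤ γ) (μ τ : ℝ) :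
    (-(τ / 2)) • ((√(2 / γ) • (1 : Matrix (Fin 2) (Fin 2) ℝ)) * (√(2 / γ) • 1)ᵀ
      + μ • !![0, 1; -1, 0] - (μ • !![0, 1; -1, 0])ᵀ) =
      Algebra.leftMulMatrix Complex.basisOneI ⟨-τ / γ, μ * τ⟩ := by
  have hNNt : (√(2 / γ) • (1 : Matrix (Fin 2) (Fin 2) ℝ)) * (√(2 / γ) • 1)ᵀ = (2 / γ) • 1 := by
    rw [transpose_smul, transpose_one, smul_mul_smul, mul_one, Real.mul_self_sqrt (by positivity)]
  rw [hNNt, Algebra.leftMulMatrix_complex]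
  ext i j
  fin_cases i <;> fin_cases j <;> simp <;> ring

/-- **Every Simple Real Spectral Mixture kernel based on the Cauchy distribution is a LEG
kernel.**  With `b = B₁ + i B₂ ∈ ℂⁿ`, `B̃ = (B₁, B₂) ∈ ℝ^{n×2}`, `J = [[0,1],[-1,0]]`,
`N = √(2/γ) I₂`, `R = μ J` and `G = N Nᵀ + R - Rᵀ`, one has
`B̃ exp(-(τ/2) G) B̃ᵀ = e^{-τ/γ} Re(e^{-iμτ} b b^*)` for all `τ ≥ 0` (entrywise). -/
theorem simple_real_sm_is_LEG
    {n : ℕ} (γ μ : ℝ) (hγ : 0 < γ) (b : Fin n → ℂ) :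
    ∀ τ : ℝ, 0 ≤ τ → ∀ i j : Fin n,
      (let Btilde : Matrix (Fin n) (Fin 2) ℝ := Matrix.of fun i => ![(b i).re, (b i).im]
       let J : Matrix (Fin 2) (Fin 2) ℝ := !![0, 1; -1, 0]
       let N : Matrix (Fin 2) (Fin 2) ℝ := Real.sqrt (2 / γ) • (1 : Matrix (Fin 2) (Fin 2) ℝ)
       let R : Matrix (Fin 2) (Fin 2) ℝ := μ • J
       let G : Matrix (Fin 2) (Fin 2) ℝ := N * Nᵀ + R - Rᵀ
       (Btilde * NormedSpace.exp ((-(τ / 2)) • G) * Btildeᵀ) i j) =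
      Real.exp (-τ / γ) * (Complex.exp (-(Complex.I * μ * τ)) * (b i * star (b j))).re := by
  intro τ _ i j
  dsimp only
  have hconj : star (Complex.exp ⟨-τ / γ, μ * τ⟩) =
      (Real.exp (-τ / γ) : ℂ) * Complex.exp (-(Complex.I * μ * τ)) := by
    rw [Complex.star_def, ← Complex.exp_conj, Complex.ofReal_exp, ← Complex.exp_add]
    congr 1
    apply Complex.ext <;> simp
  rw [smul_cauchyGenerator_eq_leftMulMatrix hγ.le, NormedSpace.exp_leftMulMatrix,
    ← Complex.exp_eq_exp_ℂ, Complex.reImRows_mul_leftMulMatrix_mul_transpose, hconj, mul_assoc,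
    Complex.re_ofReal_mul]
end

section
/- Let N₁, R₁ be ℓ₁×ℓ₁ real matrices, N₂, R₂ be ℓ₂×ℓ₂ real matrices, B₁ ∈ ℝ^{n×ℓ₁}, B₂ ∈ ℝ^{n×ℓ₂}, and Λ₁, Λ₂ ∈ ℝ^{n×n}. Define the block-diagonal direct sums N = N₁ ⊕ N₂ and R = R₁ ⊕ R₂ (i.e. fromBlocks with zero off-diagonal blocks), the concatenation B = (B₁, B₂) ∈ ℝ^{n×(ℓ₁+ℓ₂)}, and let Λ be any n×n real matrix with Λ Λᵀ = Λ₁ Λ₁ᵀ + Λ₂ Λ₂ᵀ. Then for every τ ≥ 0, C_LEG(τ; N, R, B, Λ) = C_LEG(τ; N₁, R₁, B₁, Λ₁) + C_LEG(τ; N₂, R₂, B₂, Λ₂). In other words, the sum of two LEG kernels is a LEG kernel whose rank is the sum of the ranks. -/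
/-!
The generator `N Nᵀ + R - Rᵀ` of block-diagonal `N` and `R` is block diagonal, and so is its
exponential, since `(A, D) ↦ fromBlocks A 0 0 D` is a continuous ring homomorphism from the
product ring. Sandwiching a block-diagonal matrix between `(B₁, B₂)` and its transpose gives the
sum of the two sandwiches, and the `τ = 0` terms add up by the hypothesis on `Λ`.
-/

open Matrix

/-- The LEG covariance kernel
`C_LEG(τ; N, R, B, Λ) = B exp(-(τ/2)(N Nᵀ + R - Rᵀ)) Bᵀ + δ_{τ=0} Λ Λᵀ`. -/
noncomputable def CLEG {ι κ : Type*} [Fintype ι] [DecidableEq ι] [Fintype κ]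
    (N R : Matrix ι ι ℝ) (B : Matrix κ ι ℝ) (Λ : Matrix κ κ ℝ) (τ : ℝ) : Matrix κ κ ℝ :=
  B * NormedSpace.exp ((-(τ / 2)) • (N * Nᵀ + R - Rᵀ)) * Bᵀ +
    (if τ = 0 then (1 : ℝ) else 0) • (Λ * Λᵀ)

namespace Matrix

variable {l m n α : Type*}

def fromBlocksRingHom (l m α : Type*) [Fintype l] [DecidableEq l] [Fintype m] [DecidableEq m]
    [Semiring α] : Matrix l l α × Matrix m m α →+* Matrix (l ⊕ m) (l ⊕ m) α where
  toFun p := fromBlocks p.1 0 0 p.2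
  map_one' := fromBlocks_one
  map_mul' p q := by simp [fromBlocks_multiply]
  map_zero' := fromBlocks_zero
  map_add' p q := by simp [fromBlocks_add]

section Exp

variable [Fintype l] [DecidableEq l] [Fintype m] [DecidableEq m]

theorem continuous_fromBlocksRingHom [Semiring α] [TopologicalSpace α] :
    Continuous (fromBlocksRingHom l m α) :=
  continuous_fst.matrix_fromBlocks continuous_const continuous_const continuous_snd

theorem exp_fromBlocks_zero_zero [NormedRing α] [NormedAlgebra ℚ α] [CompleteSpace α]
    (A : Matrix l l α) (D : Matrix m m α) :
    NormedSpace.exp (fromBlocks A 0 0 D) =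
      fromBlocks (NormedSpace.exp A) 0 0 (NormedSpace.exp D) := by
  open scoped Norms.Operator in
  -- The operator-norm uniformity agrees with the entrywise one only up to unfolding, so
  -- instance search needs completeness restated for it.
  have : @CompleteSpace (Matrix l l α) PseudoMetricSpace.toUniformSpace :=
    (inferInstance : CompleteSpace (Matrix l l α))
  have : @CompleteSpace (Matrix m m α) PseudoMetricSpace.toUniformSpace :=
    (inferInstance : CompleteSpace (Matrix m m α))
  have hmap := NormedSpace.map_exp _ continuous_fromBlocksRingHom (A, D)
  exact hmap.symm.trans
    (congrArg₂ (fromBlocks · 0 0 ·) (Prod.fst_exp (A, D)) (Prod.snd_exp (A, D)))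

end Exp

theorem fromCols_mul_fromBlocks_zero_zero_mul_transpose [Fintype l] [Fintype m] [Semiring α]
    (B₁ : Matrix n l α) (B₂ : Matrix n m α) (A : Matrix l l α) (D : Matrix m m α) :
    fromCols B₁ B₂ * fromBlocks A 0 0 D * (fromCols B₁ B₂)ᵀ = B₁ * A * B₁ᵀ + B₂ * D * B₂ᵀ := by
  rw [fromCols_mul_fromBlocks, transpose_fromCols, fromCols_mul_fromRows]
  simp only [Matrix.mul_zero, add_zero, zero_add]

theorem fromBlocks_zero_zero_mul_transpose_add_sub_transpose [Fintype l] [Fintype m] [Ring α]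
    (N₁ R₁ : Matrix l l α) (N₂ R₂ : Matrix m m α) :
    fromBlocks N₁ 0 0 N₂ * (fromBlocks N₁ 0 0 N₂)ᵀ + fromBlocks R₁ 0 0 R₂ -
        (fromBlocks R₁ 0 0 R₂)ᵀ =
      fromBlocks (N₁ * N₁ᵀ + R₁ - R₁ᵀ) 0 0 (N₂ * N₂ᵀ + R₂ - R₂ᵀ) := by
  simp [fromBlocks_transpose, fromBlocks_multiply, fromBlocks_add, sub_eq_add_neg, fromBlocks_neg]

end Matrix

/-- **The sum of two LEG kernels is a LEG kernel** whose rank is the sum of the ranks: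
with `N = N₁ ⊕ N₂`, `R = R₁ ⊕ R₂` (block-diagonal direct sums), `B = (B₁, B₂)` and any `Λ`
with `Λ Λᵀ = Λ₁ Λ₁ᵀ + Λ₂ Λ₂ᵀ`, one has
`C_LEG(τ; N, R, B, Λ) = C_LEG(τ; N₁, R₁, B₁, Λ₁) + C_LEG(τ; N₂, R₂, B₂, Λ₂)` for `τ ≥ 0`. -/
theorem leg_sum_is_leg
    {ℓ₁ ℓ₂ n : ℕ}
    (N₁ R₁ : Matrix (Fin ℓ₁) (Fin ℓ₁) ℝ) (N₂ R₂ : Matrix (Fin ℓ₂) (Fin ℓ₂) ℝ)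
    (B₁ : Matrix (Fin n) (Fin ℓ₁) ℝ) (B₂ : Matrix (Fin n) (Fin ℓ₂) ℝ)
    (Λ₁ Λ₂ Λ : Matrix (Fin n) (Fin n) ℝ)
    (hΛ : Λ * Λᵀ = Λ₁ * Λ₁ᵀ + Λ₂ * Λ₂ᵀ) :
    ∀ τ : ℝ, 0 ≤ τ →
      CLEG (Matrix.fromBlocks N₁ 0 0 N₂) (Matrix.fromBlocks R₁ 0 0 R₂)
        (Matrix.fromCols B₁ B₂) Λ τ =
      CLEG N₁ R₁ B₁ Λ₁ τ + CLEG N₂ R₂ B₂ Λ₂ τ := by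
  intro τ _
  rw [CLEG, CLEG, CLEG, fromBlocks_zero_zero_mul_transpose_add_sub_transpose, fromBlocks_smul,
    smul_zero, smul_zero, exp_fromBlocks_zero_zero,
    fromCols_mul_fromBlocks_zero_zero_mul_transpose, hΛ, smul_add]
  abel
end

section
/- Let A be an ℓ×ℓ complex matrix such that every eigenvalue of A has strictly negative real part. Then τ ↦ exp(τ A) is Lebesgue-integrable on [0, ∞), A is invertible, and ∫_0^∞ exp(τ A) dτ = −A^{−1}. -/
/-!
On the generalized eigenspace of `A` for `μ`, `exp (τ A) v = e^{τμ} ∑_{k<m} τ^k/k! (A - μ)^k v`, a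
finite sum of terms `τ^k e^{τμ}` with `Re μ < 0`, hence integrable on `(0, ∞)`. Over `ℂ` these
eigenspaces span, so every orbit `τ ↦ exp (τ A) v` is integrable. Since
`d/dτ exp (τ A) w = exp (τ A) A w`, an integrable orbit with integrable derivative tends to `0`,
and the fundamental theorem of calculus gives `∫_0^∞ exp (τ A) A w dτ = -w`; take `w = A⁻¹ v`.
-/

open MeasureTheory Matrix Set NormedSpace Module.End
open scoped Nat

theorem integrableOn_Ioi_cexp_mul_mul_pow {μ : ℂ} (hμ : μ.re < 0) (k : ℕ) :
    IntegrableOn (fun τ : ℝ => Complex.exp (τ * μ) * (τ : ℂ) ^ k) (Ioi 0) := by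
  refine Integrable.mono' (integrableOn_rpow_mul_exp_neg_mul_rpow (s := k) (p := 1)
    (b := -μ.re) (by linarith [k.cast_nonneg (α := ℝ)]) one_pos (neg_pos.2 hμ))
    (by fun_prop) ?_
  filter_upwards [ae_restrict_mem measurableSet_Ioi] with τ (hτ : 0 < τ)
  rw [norm_mul, Complex.norm_exp, norm_pow, Complex.norm_real, Real.norm_of_nonneg hτ.le,
    Complex.re_ofReal_mul, Real.rpow_natCast, Real.rpow_one, mul_comm, neg_neg, mul_comm μ.re]

namespace Matrix

def integrableMulVecSubmodule {m n α 𝕜 : Type*} [Fintype m] [Fintype n] [MeasurableSpace α]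
    [NormedField 𝕜] (F : α → Matrix m n 𝕜) (μ : Measure α) : Submodule 𝕜 (n → 𝕜) where
  carrier := {v | Integrable (fun x => F x *ᵥ v) μ}
  add_mem' {v w} (hv : Integrable _ μ) (hw : Integrable _ μ) :=
    show Integrable _ μ by simp only [mulVec_add]; exact hv.add hw
  zero_mem' := show Integrable _ μ by simp only [mulVec_zero]; exact integrable_zero α (m → 𝕜) μ
  smul_mem' c v (hv : Integrable _ μ) :=
    show Integrable _ μ by simp only [mulVec_smul]; exact Integrable.smul c hv

variable {n : Type*} [Fintype n] [DecidableEq n]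

theorem mem_spectrum_of_mem_maxGenEigenspace_toLin' {K : Type*} [Field K] {A : Matrix n n K}
    {μ : K} {v : n → K} (hv : v ∈ maxGenEigenspace (toLin' A) μ) (hv0 : v ≠ 0) :
    μ ∈ spectrum K A := by
  have hμ : HasUnifEigenvalue (toLin' A) μ ⊤ := (Submodule.ne_bot_iff _).2 ⟨v, hv, hv0⟩
  simpa using (hμ.lt zero_lt_one).mem_spectrum

theorem exists_pow_sub_smul_mulVec_eq_zero_of_mem_maxGenEigenspace_toLin' {K : Type*} [Field K]
    {A : Matrix n n K} {μ : K} {v : n → K} (hv : v ∈ maxGenEigenspace (toLin' A) μ) :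
    ∃ k : ℕ, (A - μ • 1) ^ k *ᵥ v = 0 := by
  obtain ⟨k, hk⟩ := (mem_maxGenEigenspace _ _ _).1 hv
  refine ⟨k, ?_⟩
  rwa [← toLin'_apply, toLin'_pow, map_sub, map_smul, toLin'_one]

theorem exp_mulVec_of_pow_mulVec_eq_zero {𝕂 : Type*} [RCLike 𝕂] {N : Matrix n n 𝕂}
    {v : n → 𝕂} {m : ℕ} (hv : N ^ m *ᵥ v = 0) :
    exp N *ᵥ v = ∑ k ∈ Finset.range m, (k ! : 𝕂)⁻¹ • (N ^ k *ᵥ v) := by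
  open scoped Norms.Operator in
  have hsum := (exp_series_hasSum_exp' (𝕂 := 𝕂) N).map (mulVec.addMonoidHomLeft v)
    (continuous_id.matrix_mulVec continuous_const)
  refine hsum.unique (hasSum_sum_of_ne_finset_zero fun k hk => ?_) |>.trans
    (Finset.sum_congr rfl fun k _ => smul_mulVec _ _ _)
  obtain ⟨j, rfl⟩ := Nat.exists_eq_add_of_le (not_lt.1 (Finset.mem_range.not.1 hk))
  simp only [Function.comp_apply, mulVec.addMonoidHomLeft, AddMonoidHom.coe_mk, ZeroHom.coe_mk]
  rw [smul_mulVec, add_comm, pow_add, ← mulVec_mulVec, hv, mulVec_zero, smul_zero]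

theorem exp_smul_one (c : ℂ) : exp (c • (1 : Matrix n n ℂ)) = Complex.exp c • 1 := by
  rw [smul_one_eq_diagonal, exp_diagonal, Pi.exp_def, smul_one_eq_diagonal, Complex.exp_eq_exp_ℂ]

theorem exp_smul_mulVec_of_pow_sub_smul_mulVec_eq_zero {A : Matrix n n ℂ} {μ : ℂ}
    {v : n → ℂ} {m : ℕ} (hv : (A - μ • 1) ^ m *ᵥ v = 0) (t : ℂ) :
    exp (t • A) *ᵥ v = ∑ k ∈ Finset.range m,
      (Complex.exp (t * μ) * t ^ k) • ((k ! : ℂ)⁻¹ • ((A - μ • 1) ^ k *ᵥ v)) := by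
  have hsplit : t • A = (t * μ) • (1 : Matrix n n ℂ) + t • (A - μ • 1) := by
    rw [smul_sub, smul_smul, add_sub_cancel]
  have hnil : (t • (A - μ • 1)) ^ m *ᵥ v = 0 := by rw [smul_pow, smul_mulVec, hv, smul_zero]
  rw [hsplit, exp_add_of_commute _ _ ((Commute.one_left _).smul_left _ |>.smul_right _),
    exp_smul_one, smul_one_mul, smul_mulVec, exp_mulVec_of_pow_mulVec_eq_zero hnil,
    Finset.smul_sum]
  refine Finset.sum_congr rfl fun k _ => ?_
  rw [smul_pow, smul_mulVec, smul_comm _ (t ^ k), smul_smul, smul_smul]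

theorem integrableOn_exp_smul_mulVec_of_pow_sub_smul_mulVec_eq_zero {A : Matrix n n ℂ} {μ : ℂ}
    (hμ : μ.re < 0) {v : n → ℂ} {m : ℕ} (hv : (A - μ • 1) ^ m *ᵥ v = 0) :
    IntegrableOn (fun τ : ℝ => exp ((τ : ℂ) • A) *ᵥ v) (Ioi 0) := by
  simp_rw [exp_smul_mulVec_of_pow_sub_smul_mulVec_eq_zero hv]
  exact integrable_finsetSum _ fun k _ => (integrableOn_Ioi_cexp_mul_mul_pow hμ k).smul_const _

theorem integrableOn_exp_smul_mulVec {A : Matrix n n ℂ} (hA : ∀ μ ∈ spectrum ℂ A, μ.re < 0)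
    (v : n → ℂ) : IntegrableOn (fun τ : ℝ => exp ((τ : ℂ) • A) *ᵥ v) (Ioi 0) := by
  suffices ⊤ ≤ integrableMulVecSubmodule (fun τ : ℝ => exp ((τ : ℂ) • A)) (volume.restrict (Ioi 0))
    from this Submodule.mem_top
  rw [← iSup_maxGenEigenspace_eq_top (toLin' A), iSup_le_iff]
  intro μ v hv
  rcases eq_or_ne v 0 with rfl | hv0
  · exact zero_mem _
  obtain ⟨m, hm⟩ := exists_pow_sub_smul_mulVec_eq_zero_of_mem_maxGenEigenspace_toLin' hv
  exact integrableOn_exp_smul_mulVec_of_pow_sub_smul_mulVec_eq_zero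
    (hA μ (mem_spectrum_of_mem_maxGenEigenspace_toLin' hv hv0)) hm

theorem hasDerivAt_exp_smul_mulVec (A : Matrix n n ℂ) (w : n → ℂ) (t : ℝ) :
    HasDerivAt (fun s : ℝ => exp ((s : ℂ) • A) *ᵥ w) (exp ((t : ℂ) • A) *ᵥ (A *ᵥ w)) t := by
  open scoped Norms.Operator in
  let L : Matrix n n ℂ →L[ℝ] n → ℂ :=
    (((mulVecBilin ℂ ℂ).flip w).restrictScalars ℝ).toContinuousLinearMap
  simp_rw [Complex.coe_smul]
  exact (L.hasFDerivAt.comp_hasDerivAt t (hasDerivAt_exp_smul_const A t)).congr_deriv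
    (mulVec_mulVec _ _ _).symm

theorem integral_Ioi_exp_smul_mulVec_mulVec {A : Matrix n n ℂ}
    (hint : ∀ v, IntegrableOn (fun τ : ℝ => exp ((τ : ℂ) • A) *ᵥ v) (Ioi 0)) (w : n → ℂ) :
    ∫ τ in Ioi (0 : ℝ), exp ((τ : ℂ) • A) *ᵥ (A *ᵥ w) = -w := by
  have hderiv := hasDerivAt_exp_smul_mulVec A w
  have hlim :=
    tendsto_zero_of_hasDerivAt_of_integrableOn_Ioi (fun τ _ => hderiv τ) (hint _) (hint w)
  rw [integral_Ioi_of_hasDerivAt_of_tendsto' (fun τ _ => hderiv τ) (hint _) hlim]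
  simp

end Matrix

/-- If every eigenvalue of the complex matrix `A` has strictly negative real part, then
`τ ↦ exp(τ A)` is Lebesgue-integrable on `[0, ∞)` (entrywise), `A` is invertible, and
`∫_0^∞ exp(τ A) dτ = -A⁻¹` (entrywise). -/
theorem integral_exp_of_spectrum_neg_re
    {ℓ : ℕ} (A : Matrix (Fin ℓ) (Fin ℓ) ℂ)
    (hA : ∀ lam : ℂ, lam ∈ spectrum ℂ A → lam.re < 0) :
    (∀ i j : Fin ℓ,
      IntegrableOn (fun τ : ℝ => NormedSpace.exp ((τ : ℂ) • A) i j) (Set.Ici 0)) ∧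
    IsUnit A ∧
    (∀ i j : Fin ℓ,
      (∫ τ : ℝ in Set.Ici (0 : ℝ), NormedSpace.exp ((τ : ℂ) • A) i j) = (-A⁻¹) i j) := by
  have hint := integrableOn_exp_smul_mulVec hA
  have hunit : IsUnit A := (spectrum.zero_notMem_iff ℂ).1 fun h => (hA 0 h).false
  have hentry (i j : Fin ℓ) : (fun τ : ℝ => exp ((τ : ℂ) • A) i j) =
      fun τ : ℝ => (exp ((τ : ℂ) • A) *ᵥ Pi.single j 1) i := by
    simp
  refine ⟨fun i j => ?_, hunit, fun i j => ?_⟩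
  · rw [integrableOn_Ici_iff_integrableOn_Ioi, hentry]
    exact (hint _).eval i
  · have hj := integral_Ioi_exp_smul_mulVec_mulVec hint (A⁻¹ *ᵥ Pi.single j 1)
    rw [mulVec_mulVec, mul_nonsing_inv _ ((isUnit_iff_isUnit_det A).1 hunit), one_mulVec] at hj
    rw [integral_Ici_eq_integral_Ioi, hentry, ← eval_integral fun i => (hint _).eval i, hj]
    simp
end

section
/- Let N, R be ℓ×ℓ real matrices and set G = N Nᵀ + R − Rᵀ. Then for every t ≥ 0, ∫_0^t exp(G s / 2) · N Nᵀ · exp(Gᵀ s / 2) ds = exp(G t / 2) · exp(Gᵀ t / 2) − I, where I is the ℓ×ℓ identity matrix. -/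
/-!
With `A = G/2` the antisymmetric part `R - Rᵀ` cancels in `A + Aᵀ = N Nᵀ`, so by the product rule
`d/ds (exp(sA) exp(sAᵀ)) = exp(sA) N Nᵀ exp(sAᵀ)`; the identity is the fundamental theorem of
calculus on `[0, t]`.
-/

open MeasureTheory Matrix

section ExpProduct

variable {𝕂 𝔸 : Type*} [RCLike 𝕂] [NormedRing 𝔸] [NormedAlgebra 𝕂 𝔸] [CompleteSpace 𝔸]

theorem hasDerivAt_exp_smul_mul_exp_smul (A B : 𝔸) (s : 𝕂) :
    HasDerivAt (fun u : 𝕂 => NormedSpace.exp (u • A) * NormedSpace.exp (u • B))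
      (NormedSpace.exp (s • A) * (A + B) * NormedSpace.exp (s • B)) s := by
  refine ((hasDerivAt_exp_smul_const A s).mul (hasDerivAt_exp_smul_const' B s)).congr_deriv ?_
  noncomm_ring

theorem continuous_exp_smul_mul_mul_exp_smul (A B C : 𝔸) :
    Continuous fun s : 𝕂 => NormedSpace.exp (s • A) * C * NormedSpace.exp (s • B) :=
  continuous_iff_continuousAt.2 fun s =>
    ((hasDerivAt_exp_smul_const A s).continuousAt.mul continuousAt_const).mul
      (hasDerivAt_exp_smul_const B s).continuousAt

end ExpProduct

/-- The functional `φ` (an entry, below) avoids comparing Bochner integrals of matrices taken for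
different norms. -/
theorem integral_exp_smul_mul_mul_exp_smul {𝔸 F : Type*} [NormedRing 𝔸] [NormedAlgebra ℝ 𝔸]
    [CompleteSpace 𝔸] [NormedAddCommGroup F] [NormedSpace ℝ F] [CompleteSpace F]
    (φ : 𝔸 →L[ℝ] F) {A B C : 𝔸} (hC : A + B = C) (a b : ℝ) :
    ∫ s in a..b, φ (NormedSpace.exp (s • A) * C * NormedSpace.exp (s • B)) =
      φ (NormedSpace.exp (b • A) * NormedSpace.exp (b • B)) -
        φ (NormedSpace.exp (a • A) * NormedSpace.exp (a • B)) := by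
  subst hC
  exact intervalIntegral.integral_eq_sub_of_hasDerivAt
    (fun s _ => φ.hasFDerivAt.comp_hasDerivAt s (hasDerivAt_exp_smul_mul_exp_smul A B s))
    ((φ.continuous.comp (continuous_exp_smul_mul_mul_exp_smul A B _)).intervalIntegrable a b)

theorem half_smul_add_transpose_half_smul {ℓ : Type*} [Fintype ℓ] (N R : Matrix ℓ ℓ ℝ) :
    (2⁻¹ : ℝ) • (N * Nᵀ + R - Rᵀ) + ((2⁻¹ : ℝ) • (N * Nᵀ + R - Rᵀ))ᵀ = N * Nᵀ := by
  simp only [transpose_smul, transpose_sub, transpose_add, transpose_mul, transpose_transpose]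
  module

-- Any normed algebra structure on matrices serves: the statement itself does not mention a norm.
attribute [local instance] Matrix.linftyOpNormedRing Matrix.linftyOpNormedAlgebra in
/-- With `G = N Nᵀ + R - Rᵀ`, for every `t ≥ 0` one has (entrywise)
`∫_0^t exp(Gs/2) N Nᵀ exp(Gᵀs/2) ds = exp(Gt/2) exp(Gᵀt/2) - I`. -/
theorem integral_exp_nnt_exp_transpose
    {ℓ : ℕ} (N R : Matrix (Fin ℓ) (Fin ℓ) ℝ) :
    ∀ t : ℝ, 0 ≤ t → ∀ i j : Fin ℓ,
      (∫ s in (0 : ℝ)..t,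
        (NormedSpace.exp ((s / 2) • (N * Nᵀ + R - Rᵀ)) * (N * Nᵀ) *
          NormedSpace.exp ((s / 2) • (N * Nᵀ + R - Rᵀ)ᵀ)) i j) =
      (NormedSpace.exp ((t / 2) • (N * Nᵀ + R - Rᵀ)) *
        NormedSpace.exp ((t / 2) • (N * Nᵀ + R - Rᵀ)ᵀ) -
        (1 : Matrix (Fin ℓ) (Fin ℓ) ℝ)) i j := by
  intro t _ i j
  have hhalf : ∀ (s : ℝ) (M : Matrix (Fin ℓ) (Fin ℓ) ℝ), (s / 2) • M = s • (2⁻¹ : ℝ) • M :=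
    fun s M => by rw [smul_smul, div_eq_mul_inv]
  simp only [hhalf]
  refine (integral_exp_smul_mul_mul_exp_smul (entryLinearMap ℝ ℝ i j).toContinuousLinearMap
    (half_smul_add_transpose_half_smul N R) 0 t).trans ?_
  simp only [zero_smul, NormedSpace.exp_zero, one_mul]
  rfl
end

section
/- Let P ∈ ℝ^{p×m} and Q ∈ ℝ^{q×m} satisfy P Pᵀ = I_p, Q Qᵀ = I_q, P Qᵀ = 0, and Pᵀ P + Qᵀ Q = I_m. Let J ∈ ℝ^{m×m} be symmetric. Suppose D ∈ ℝ^{p×p} is invertible with D Dᵀ = P J Pᵀ; set U = Q J Pᵀ (D^{−1})ᵀ; and suppose L̃ ∈ ℝ^{q×q} satisfies L̃ L̃ᵀ = Q J Qᵀ − U Uᵀ. Then the matrix L = Pᵀ D P + Qᵀ U P + Qᵀ L̃ Q satisfies L Lᵀ = J. (This is the correctness of one step of the Cyclic Reduction decomposition.) -/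
open Matrix

/-- **Correctness of one step of the Cyclic Reduction decomposition.**  If `P`, `Q` form a
permutation split (`P Pᵀ = I`, `Q Qᵀ = I`, `P Qᵀ = 0`, `Pᵀ P + Qᵀ Q = I`), `J` is symmetric,
`D` is invertible with `D Dᵀ = P J Pᵀ`, `U = Q J Pᵀ (D⁻¹)ᵀ`, and `L̃ L̃ᵀ = Q J Qᵀ - U Uᵀ`,
then `L = Pᵀ D P + Qᵀ U P + Qᵀ L̃ Q` satisfies `L Lᵀ = J`. -/
theorem cyclic_reduction_step
    {p q m : ℕ}
    (P : Matrix (Fin p) (Fin m) ℝ) (Q : Matrix (Fin q) (Fin m) ℝ)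
    (hP : P * Pᵀ = 1) (hQ : Q * Qᵀ = 1) (hPQ : P * Qᵀ = 0)
    (hsum : Pᵀ * P + Qᵀ * Q = 1)
    (J : Matrix (Fin m) (Fin m) ℝ) (hJ : Jᵀ = J)
    (D : Matrix (Fin p) (Fin p) ℝ) (hD : IsUnit D) (hDD : D * Dᵀ = P * J * Pᵀ)
    (U : Matrix (Fin q) (Fin p) ℝ) (hU : U = Q * J * Pᵀ * (D⁻¹)ᵀ)
    (L' : Matrix (Fin q) (Fin q) ℝ) (hL' : L' * L'ᵀ = Q * J * Qᵀ - U * Uᵀ) :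
    (Pᵀ * D * P + Qᵀ * U * P + Qᵀ * L' * Q) *
      (Pᵀ * D * P + Qᵀ * U * P + Qᵀ * L' * Q)ᵀ = J := by
  have hDdet : IsUnit D.det := (Matrix.isUnit_iff_isUnit_det D).mp hD
  have hQP : Q * Pᵀ = 0 := by
    have := congrArg Matrix.transpose hPQ
    simpa using this
  have hP' : ∀ (n : ℕ) (X : Matrix (Fin p) (Fin n) ℝ), P * (Pᵀ * X) = X := by
    intro n X; rw [← Matrix.mul_assoc, hP, Matrix.one_mul]
  have hQ' : ∀ (n : ℕ) (X : Matrix (Fin q) (Fin n) ℝ), Q * (Qᵀ * X) = X := by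
    intro n X; rw [← Matrix.mul_assoc, hQ, Matrix.one_mul]
  have hPQ' : ∀ (n : ℕ) (X : Matrix (Fin q) (Fin n) ℝ), P * (Qᵀ * X) = 0 := by
    intro n X; rw [← Matrix.mul_assoc, hPQ, Matrix.zero_mul]
  have hQP' : ∀ (n : ℕ) (X : Matrix (Fin p) (Fin n) ℝ), Q * (Pᵀ * X) = 0 := by
    intro n X; rw [← Matrix.mul_assoc, hQP, Matrix.zero_mul]
  have hUt : Uᵀ = D⁻¹ * (P * (J * Qᵀ)) := by
    rw [hU]
    simp [Matrix.transpose_mul, hJ, Matrix.mul_assoc]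
  have hDU1 : D * Uᵀ = P * (J * Qᵀ) := by
    rw [hUt, ← Matrix.mul_assoc, Matrix.mul_nonsing_inv _ hDdet, Matrix.one_mul]
  have hDU : ∀ (n : ℕ) (X : Matrix (Fin q) (Fin n) ℝ),
      D * (Uᵀ * X) = P * (J * (Qᵀ * X)) := by
    intro n X
    rw [← Matrix.mul_assoc, hDU1, Matrix.mul_assoc, Matrix.mul_assoc]
  have hUDt : U * Dᵀ = Q * (J * Pᵀ) := by
    have := congrArg Matrix.transpose hDU1
    simpa [Matrix.transpose_mul, hJ, Matrix.mul_assoc] using this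
  have hDDt : ∀ (n : ℕ) (X : Matrix (Fin p) (Fin n) ℝ),
      D * (Dᵀ * X) = P * (J * (Pᵀ * X)) := by
    intro n X
    rw [← Matrix.mul_assoc, hDD, Matrix.mul_assoc, Matrix.mul_assoc]
  have hLLt : L' * (L'ᵀ * Q) = Q * (J * (Qᵀ * Q)) - U * (Uᵀ * Q) := by
    rw [← Matrix.mul_assoc, hL', Matrix.sub_mul, Matrix.mul_assoc, Matrix.mul_assoc,
      Matrix.mul_assoc]
  simp only [Matrix.transpose_add, Matrix.transpose_mul, Matrix.transpose_transpose,
    Matrix.add_mul, Matrix.mul_add, Matrix.mul_assoc]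
  rw [hP' _ (Dᵀ * P), hP' _ (Uᵀ * Q), hPQ' _ (L'ᵀ * Q), hQP' _ (Dᵀ * P), hQP' _ (Uᵀ * Q),
    hQ' _ (L'ᵀ * Q)]
  simp only [Matrix.mul_zero, add_zero, zero_add]
  rw [hDDt _ P, hDU _ Q, hLLt]
  rw [Matrix.mul_sub, ← Matrix.mul_assoc U Dᵀ P]
  rw [hUDt]
  have hJ' : J = (Pᵀ * P + Qᵀ * Q) * J * (Pᵀ * P + Qᵀ * Q) := by
    rw [hsum, Matrix.one_mul, Matrix.mul_one]
  conv_rhs => rw [hJ']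
  simp only [Matrix.add_mul, Matrix.mul_add, Matrix.mul_assoc]
  abel
end
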